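/- arXiv:2111.08036 — 3 statements merged into one kernel-verified Lean document; each statement's English description precedes it below -/
import Mathlib

section
/- Fix an integer n ≥ 4. The set of images π(P), as P ranges over the homogeneous degree-2 polynomials in R satisfying φ_σ(P) = P for all σ ∈ Sₙ, is exactly the set of polynomials of the form c·Σᵢ aᵢ² + 2d·Σ_{i<j} aᵢaⱼ with c, d ∈ ℤ. -/
/-!
`π` turns `φ_σ` into the renaming of variables by `σ`, up to the factor `sgn σ` on every
variable; on quadratic forms these factors cancel, so `π(P)` is a symmetric quadratic form
`c Σ aᵢ² + e Σ_{i<j} aᵢaⱼ`. Its coefficient `e` of `a₀a₁` is the signed sum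
`P₊₊ - P₊₋ - P₋₊ + P₋₋` of the coefficients of `a₀^± a₁^±` in `P`. The odd permutation `(2 3)`
fixes `0` and `1` and swaps `+` with `-`, so `P₊₊ = P₋₋` and `P₊₋ = P₋₊`, and `e` is even.
Conversely `Σ aᵢ⁺aᵢ⁻` and `(Σ aᵢ⁺)(Σ aᵢ⁻)` are invariant, with images `-Σ aᵢ²` and `-(Σ aᵢ)²`.
-/

set_option synthInstance.maxHeartbeats 1000000
set_option maxHeartbeats 1000000

open MvPolynomial

/-- The signed permutation of the `2n` variables `aᵢ⁺ = (i, true)`, `aᵢ⁻ = (i, false)`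
associated to `σ ∈ Sₙ`: it sends `aᵢ^ε` to `a_{σ(i)}^{ε·sgn σ}`. -/
def signedVar {n : ℕ} (σ : Equiv.Perm (Fin n)) (p : Fin n × Bool) : Fin n × Bool :=
  (σ p.1, if Equiv.Perm.sign σ = 1 then p.2 else !p.2)

/-- The ring automorphism `φ_σ` of `R = ℤ[a₁⁺, a₁⁻, …, aₙ⁺, aₙ⁻]` induced by the signed
permutation action of `σ ∈ Sₙ` on the variables. -/
noncomputable def phi {n : ℕ} (σ : Equiv.Perm (Fin n)) :
    MvPolynomial (Fin n × Bool) ℤ →ₐ[ℤ] MvPolynomial (Fin n × Bool) ℤ :=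
  MvPolynomial.rename (signedVar σ)

/-- The `ℤ`-algebra homomorphism `π : R → S = ℤ[a₁, …, aₙ]` with `π(aᵢ⁺) = aᵢ` and
`π(aᵢ⁻) = −aᵢ`. -/
noncomputable def piMap {n : ℕ} :
    MvPolynomial (Fin n × Bool) ℤ →ₐ[ℤ] MvPolynomial (Fin n) ℤ :=
  aeval (fun p : Fin n × Bool => if p.2 then (X p.1 : MvPolynomial (Fin n) ℤ) else - X p.1)

theorem Finsupp.single_one_add_single_one_eq_iff {σ : Type*} {a b c d : σ} :
    Finsupp.single a 1 + Finsupp.single b 1 = Finsupp.single c 1 + Finsupp.single d 1 ↔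
      a = c ∧ b = d ∨ a = d ∧ b = c := by
  simpa using Finsupp.single_add_single_eq_single_add_single (M := ℕ) one_ne_zero one_ne_zero

theorem Equiv.Perm.exists_apply_eq_and_apply_eq {α : Type*} [DecidableEq α] {a b i j : α}
    (hab : a ≠ b) (hij : i ≠ j) : ∃ e : Equiv.Perm α, e a = i ∧ e b = j := by
  have hb : Equiv.swap a i b ≠ i := by
    rw [Ne, Equiv.swap_apply_eq_iff, Equiv.swap_apply_right]
    exact hab.symm
  exact ⟨Equiv.swap (Equiv.swap a i b) j * Equiv.swap a i,
    by simp [Equiv.swap_apply_of_ne_of_ne hb.symm hij], by simp⟩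

theorem Finset.sq_sum_eq_sum_sq_add_two_mul_sum_sum_Ioi {ι R : Type*} [Fintype ι]
    [LinearOrder ι] [LocallyFiniteOrderTop ι] [LocallyFiniteOrderBot ι] [CommSemiring R]
    (f : ι → R) :
    (∑ i, f i) ^ 2 = ∑ i, f i ^ 2 + 2 * ∑ i, ∑ j ∈ Finset.Ioi i, f i * f j := by
  classical
  have hoff := Finset.sum_sum_Ioi_add_eq_sum_sum_off_diag fun i j => f i * f j
  calc (∑ i, f i) ^ 2 = ∑ i, (f i ^ 2 + ∑ j ∈ {i}ᶜ, f j * f i) := by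
        rw [sq, Finset.sum_mul_sum, Finset.sum_comm]
        refine Finset.sum_congr rfl fun i _ => ?_
        rw [Fintype.sum_eq_add_sum_compl i, sq]
    _ = ∑ i, f i ^ 2 + 2 * ∑ i, ∑ j ∈ Finset.Ioi i, f i * f j := by
        rw [Finset.sum_add_distrib, ← hoff, Finset.mul_sum]
        simp_rw [Finset.mul_sum]
        exact congrArg _ <| Finset.sum_congr rfl fun i _ => Finset.sum_congr rfl fun j _ => by ring

namespace MvPolynomial

open scoped Pointwise

variable {σ R : Type*} [CommSemiring R]

theorem X_mul_X_eq_monomial (a b : σ) :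
    (X a * X b : MvPolynomial σ R) = monomial (Finsupp.single a 1 + Finsupp.single b 1) 1 := by
  simp [X, monomial_mul]

theorem coeff_single_add_single_X_mul_X [DecidableEq σ] (a b c d : σ) :
    coeff (Finsupp.single c 1 + Finsupp.single d 1) (X a * X b : MvPolynomial σ R) =
      if a = c ∧ b = d ∨ a = d ∧ b = c then 1 else 0 := by
  rw [X_mul_X_eq_monomial, coeff_monomial]
  simp only [Finsupp.single_one_add_single_one_eq_iff]

theorem coeff_single_add_single_of_rename_eq {e : Equiv.Perm σ} {φ : MvPolynomial σ R}
    (h : rename e φ = φ) (i j : σ) :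
    coeff (Finsupp.single (e i) 1 + Finsupp.single (e j) 1) φ =
      coeff (Finsupp.single i 1 + Finsupp.single j 1) φ := by
  conv_lhs => rw [← h]
  rw [← Finsupp.mapDomain_single, ← Finsupp.mapDomain_single, ← Finsupp.mapDomain_add,
    coeff_rename_mapDomain _ e.injective]

theorem IsHomogeneous.mem_span_X_mul_X {φ : MvPolynomial σ R} (hφ : φ.IsHomogeneous 2) :
    φ ∈ Submodule.span R (Set.range fun p : σ × σ => X p.1 * X p.2) := by
  rw [← mem_homogeneousSubmodule, ← homogeneousSubmodule_one_pow, pow_two,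
    homogeneousSubmodule_one_eq_span_X, Submodule.span_mul_span] at hφ
  have hrange : Set.range (X : σ → MvPolynomial σ R) * Set.range (X : σ → MvPolynomial σ R) =
      Set.range fun p : σ × σ => (X p.1 * X p.2 : MvPolynomial σ R) := by
    ext
    simp [Set.mem_mul, eq_comm]
  rwa [hrange] at hφ

theorem IsHomogeneous.linearMap_eq_of_X_mul_X {M : Type*} [AddCommMonoid M] [Module R M]
    {f g : MvPolynomial σ R →ₗ[R] M} (hfg : ∀ a b, f (X a * X b) = g (X a * X b))
    {φ : MvPolynomial σ R} (hφ : φ.IsHomogeneous 2) : f φ = g φ :=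
  LinearMap.eqOn_span (by rintro _ ⟨⟨a, b⟩, rfl⟩; exact hfg a b) hφ.mem_span_X_mul_X

section LinearOrder

variable [Fintype σ] [LinearOrder σ] [LocallyFiniteOrderTop σ]

theorem IsHomogeneous.eq_sum_Ici {φ : MvPolynomial σ R} (hφ : φ.IsHomogeneous 2) :
    φ = ∑ i, ∑ j ∈ Finset.Ici i,
      coeff (Finsupp.single i 1 + Finsupp.single j 1) φ • (X i * X j) := by
  classical
  have hX : ∀ a b : σ, a ≤ b → (X a * X b : MvPolynomial σ R) = ∑ i, ∑ j ∈ Finset.Ici i,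
      coeff (Finsupp.single i 1 + Finsupp.single j 1) (X a * X b : MvPolynomial σ R) •
        (X i * X j) := by
    intro a b hab
    have hcond : ∀ i, ∀ j ∈ Finset.Ici i, (a = i ∧ b = j ∨ a = j ∧ b = i ↔ i = a ∧ j = b) := by
      intro i j hij
      rw [Finset.mem_Ici] at hij
      constructor
      · rintro (⟨rfl, rfl⟩ | ⟨rfl, rfl⟩)
        · exact ⟨rfl, rfl⟩
        · exact ⟨le_antisymm hij hab, le_antisymm hab hij⟩
      · rintro ⟨rfl, rfl⟩
        exact Or.inl ⟨rfl, rfl⟩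
    simp +contextual only [coeff_single_add_single_X_mul_X, hcond, ite_smul, one_smul, zero_smul]
    simp [ite_and, Finset.sum_ite_eq', hab]
  have key := hφ.linearMap_eq_of_X_mul_X (f := LinearMap.id) (g := ∑ i, ∑ j ∈ Finset.Ici i,
    (lcoeff R (Finsupp.single i 1 + Finsupp.single j 1)).smulRight (X i * X j)) fun a b => by
    rcases le_total a b with hab | hba
    · simpa using hX a b hab
    · simpa [mul_comm (X a)] using hX b a hba
  simpa using key

theorem IsHomogeneous.eq_smul_sum_X_sq_add_smul_sum_X_mul_X {φ : MvPolynomial σ R}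
    (hφ : φ.IsHomogeneous 2) (hsymm : ∀ e : Equiv.Perm σ, rename e φ = φ) {a b : σ}
    (hab : a ≠ b) :
    φ = coeff (Finsupp.single a 1 + Finsupp.single a 1) φ • ∑ i, X i ^ 2
      + coeff (Finsupp.single a 1 + Finsupp.single b 1) φ •
        ∑ i, ∑ j ∈ Finset.Ioi i, X i * X j := by
  classical
  have hdiag : ∀ i, coeff (Finsupp.single i 1 + Finsupp.single i 1) φ =
      coeff (Finsupp.single a 1 + Finsupp.single a 1) φ := fun i => by
    simpa using coeff_single_add_single_of_rename_eq (hsymm (Equiv.swap a i)) a a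
  have hoff : ∀ i, ∀ j ∈ Finset.Ioi i, coeff (Finsupp.single i 1 + Finsupp.single j 1) φ =
      coeff (Finsupp.single a 1 + Finsupp.single b 1) φ := fun i j hj => by
    obtain ⟨e, rfl, rfl⟩ := Equiv.Perm.exists_apply_eq_and_apply_eq hab (Finset.mem_Ioi.1 hj).ne
    exact coeff_single_add_single_of_rename_eq (hsymm e) a b
  conv_lhs => rw [hφ.eq_sum_Ici]
  simp_rw [Finset.Ici_eq_cons_Ioi, Finset.sum_cons, Finset.sum_add_distrib, hdiag,
    Finset.smul_sum, sq]
  congr 1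
  exact Finset.sum_congr rfl fun i _ => Finset.sum_congr rfl fun j hj => by rw [hoff i j hj]

end LinearOrder

end MvPolynomial

section SignedPermutation

variable {n : ℕ}

theorem signedVar_injective (σ : Equiv.Perm (Fin n)) : Function.Injective (signedVar σ) := by
  rintro ⟨i, b⟩ ⟨j, c⟩ h
  simp only [signedVar, Prod.mk.injEq] at h
  split_ifs at h <;> simp_all

theorem phi_X (σ : Equiv.Perm (Fin n)) (p : Fin n × Bool) : phi σ (X p) = X (signedVar σ p) :=
  rename_X _ _

theorem piMap_X (p : Fin n × Bool) : piMap (X p) = if p.2 then X p.1 else -X p.1 :=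
  aeval_X _ _

theorem piMap_X_signedVar (σ : Equiv.Perm (Fin n)) (p : Fin n × Bool) :
    piMap (X (signedVar σ p)) = (Equiv.Perm.sign σ : ℤ) • rename σ (piMap (X p)) := by
  obtain ⟨i, b⟩ := p
  rcases Int.units_eq_one_or (Equiv.Perm.sign σ) with h | h <;> cases b <;>
    simp [signedVar, piMap_X, h]

theorem isHomogeneous_piMap {P : MvPolynomial (Fin n × Bool) ℤ} {k : ℕ}
    (hP : P.IsHomogeneous k) : (piMap P).IsHomogeneous k := by
  have hX : ∀ p : Fin n × Bool, (piMap (X p)).IsHomogeneous 1 := fun p => by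
    rw [piMap_X]
    split_ifs
    exacts [isHomogeneous_X ℤ p.1, (isHomogeneous_X ℤ p.1).neg]
  have h := hP.aeval (piMap ∘ X) hX
  rwa [one_mul, ← aeval_unique] at h

theorem piMap_phi {P : MvPolynomial (Fin n × Bool) ℤ} (hP : P.IsHomogeneous 2)
    (σ : Equiv.Perm (Fin n)) : piMap (phi σ P) = rename σ (piMap P) :=
  hP.linearMap_eq_of_X_mul_X (f := piMap.toLinearMap ∘ₗ (phi σ).toLinearMap)
    (g := (rename σ).toLinearMap ∘ₗ piMap.toLinearMap) fun p q => by
      simp only [LinearMap.comp_apply, AlgHom.toLinearMap_apply, map_mul, phi_X,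
        piMap_X_signedVar, smul_mul_smul_comm, ← Units.val_mul, Int.units_mul_self,
        Units.val_one, one_smul]

theorem coeff_piMap_single_add_single {i j : Fin n} (hij : i ≠ j)
    {P : MvPolynomial (Fin n × Bool) ℤ} (hP : P.IsHomogeneous 2) :
    coeff (Finsupp.single i 1 + Finsupp.single j 1) (piMap P) =
      coeff (Finsupp.single (i, true) 1 + Finsupp.single (j, true) 1) P
        - coeff (Finsupp.single (i, true) 1 + Finsupp.single (j, false) 1) P
        - coeff (Finsupp.single (i, false) 1 + Finsupp.single (j, true) 1) P
        + coeff (Finsupp.single (i, false) 1 + Finsupp.single (j, false) 1) P := by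
  classical
  have key := hP.linearMap_eq_of_X_mul_X
    (f := (lcoeff ℤ (Finsupp.single i 1 + Finsupp.single j 1)) ∘ₗ piMap.toLinearMap)
    (g := lcoeff ℤ (Finsupp.single (i, true) 1 + Finsupp.single (j, true) 1)
        - lcoeff ℤ (Finsupp.single (i, true) 1 + Finsupp.single (j, false) 1)
        - lcoeff ℤ (Finsupp.single (i, false) 1 + Finsupp.single (j, true) 1)
        + lcoeff ℤ (Finsupp.single (i, false) 1 + Finsupp.single (j, false) 1)) fun p q => by
      obtain ⟨k, β⟩ := p
      obtain ⟨l, γ⟩ := q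
      cases β <;> cases γ <;>
        simp [piMap_X, coeff_single_add_single_X_mul_X] <;> split_ifs <;> grind
  simpa using key

theorem coeff_eq_of_phi_eq {τ : Equiv.Perm (Fin n)} (hτ : Equiv.Perm.sign τ = -1) {i j : Fin n}
    (hi : τ i = i) (hj : τ j = j) {P : MvPolynomial (Fin n × Bool) ℤ} (hP : phi τ P = P)
    (b c : Bool) :
    coeff (Finsupp.single (i, !b) 1 + Finsupp.single (j, !c) 1) P =
      coeff (Finsupp.single (i, b) 1 + Finsupp.single (j, c) 1) P := by
  have hsigned : ∀ (k : Fin n) (d : Bool), τ k = k → signedVar τ (k, d) = (k, !d) := by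
    intro k d hk
    simp [signedVar, hτ, hk]
  conv_lhs => rw [← hP]
  rw [← hsigned i b hi, ← hsigned j c hj, ← Finsupp.mapDomain_single (f := signedVar τ),
    ← Finsupp.mapDomain_single (f := signedVar τ), ← Finsupp.mapDomain_add, phi,
    coeff_rename_mapDomain _ (signedVar_injective τ)]

theorem two_dvd_coeff_piMap {τ : Equiv.Perm (Fin n)} (hτ : Equiv.Perm.sign τ = -1) {i j : Fin n}
    (hij : i ≠ j) (hi : τ i = i) (hj : τ j = j) {P : MvPolynomial (Fin n × Bool) ℤ}
    (hP : P.IsHomogeneous 2) (hτP : phi τ P = P) :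
    2 ∣ coeff (Finsupp.single i 1 + Finsupp.single j 1) (piMap P) := by
  have hff := coeff_eq_of_phi_eq hτ hi hj hτP false false
  have hft := coeff_eq_of_phi_eq hτ hi hj hτP false true
  rw [Bool.not_false] at hff hft
  rw [Bool.not_true] at hft
  rw [coeff_piMap_single_add_single hij hP, ← hff, ← hft]
  exact ⟨coeff (Finsupp.single (i, true) 1 + Finsupp.single (j, true) 1) P
    - coeff (Finsupp.single (i, true) 1 + Finsupp.single (j, false) 1) P, by ring⟩

noncomputable def pairedProductSum (n : ℕ) : MvPolynomial (Fin n × Bool) ℤ :=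
  ∑ i, X (i, true) * X (i, false)

noncomputable def productOfSums (n : ℕ) : MvPolynomial (Fin n × Bool) ℤ :=
  (∑ i, X (i, true)) * ∑ i, X (i, false)

theorem isHomogeneous_pairedProductSum : (pairedProductSum n).IsHomogeneous 2 :=
  IsHomogeneous.sum _ _ _ fun _ _ => (isHomogeneous_X ℤ _).mul (isHomogeneous_X ℤ _)

theorem isHomogeneous_productOfSums : (productOfSums n).IsHomogeneous 2 :=
  (IsHomogeneous.sum _ _ _ fun _ _ => isHomogeneous_X ℤ _).mul
    (IsHomogeneous.sum _ _ _ fun _ _ => isHomogeneous_X ℤ _)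

theorem phi_pairedProductSum (σ : Equiv.Perm (Fin n)) :
    phi σ (pairedProductSum n) = pairedProductSum n := by
  simp only [pairedProductSum, map_sum, map_mul, phi_X, signedVar]
  split_ifs
  · exact Equiv.sum_comp σ fun i => X (i, true) * X (i, false)
  · simpa [mul_comm] using Equiv.sum_comp σ fun i => X (i, false) * X (i, true)

theorem phi_productOfSums (σ : Equiv.Perm (Fin n)) :
    phi σ (productOfSums n) = productOfSums n := by
  have hsum : ∀ b, phi σ (∑ i, X (i, b)) =
      ∑ i, X (i, if Equiv.Perm.sign σ = 1 then b else !b) := fun b => by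
    simp only [map_sum, phi_X, signedVar]
    exact Equiv.sum_comp σ fun i => X (i, _)
  rw [productOfSums, map_mul, hsum, hsum]
  split_ifs
  · rfl
  · exact mul_comm _ _

theorem piMap_pairedProductSum : piMap (pairedProductSum n) = -∑ i, X i ^ 2 := by
  simp [pairedProductSum, piMap_X, sq]

theorem piMap_productOfSums : piMap (productOfSums n) = -(∑ i, X i) ^ 2 := by
  simp [productOfSums, piMap_X, sq]

end SignedPermutation

/-- Fix `n ≥ 4`.  The set of images `π(P)`, as `P` ranges over the
homogeneous degree-2 polynomials of `R` satisfying `φ_σ(P) = P` for all `σ ∈ Sₙ`, is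
exactly the set of polynomials of the form `c·Σᵢ aᵢ² + 2d·Σ_{i<j} aᵢaⱼ` with
`c, d ∈ ℤ`. -/
theorem stmt5 (n : ℕ) (hn : 4 ≤ n) :
    {Q : MvPolynomial (Fin n) ℤ |
        ∃ P : MvPolynomial (Fin n × Bool) ℤ, P.IsHomogeneous 2 ∧
          (∀ σ : Equiv.Perm (Fin n), phi σ P = P) ∧ piMap P = Q} =
      {Q : MvPolynomial (Fin n) ℤ |
        ∃ c d : ℤ,
          Q = c • (∑ i : Fin n, X i ^ 2)
            + (2 * d) • (∑ i : Fin n, ∑ j ∈ Finset.Ioi i, X i * X j)} := by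
  ext Q
  constructor
  · rintro ⟨P, hP, hinv, rfl⟩
    have h01 : (⟨0, by omega⟩ : Fin n) ≠ ⟨1, by omega⟩ := by simp
    obtain ⟨d, hd⟩ := two_dvd_coeff_piMap (τ := Equiv.swap ⟨2, by omega⟩ ⟨3, by omega⟩)
      (Equiv.Perm.sign_swap (by simp)) h01 (Equiv.swap_apply_of_ne_of_ne (by simp) (by simp))
      (Equiv.swap_apply_of_ne_of_ne (by simp) (by simp)) hP (hinv _)
    exact ⟨_, d, hd ▸ (isHomogeneous_piMap hP).eq_smul_sum_X_sq_add_smul_sum_X_mul_X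
      (fun σ => by rw [← piMap_phi hP, hinv]) h01⟩
  · rintro ⟨c, d, rfl⟩
    refine ⟨(d - c) • pairedProductSum n - d • productOfSums n, ?_, fun σ => ?_, ?_⟩
    · exact Submodule.sub_mem _ (Submodule.smul_mem _ _ isHomogeneous_pairedProductSum)
        (Submodule.smul_mem (homogeneousSubmodule _ ℤ 2) _ isHomogeneous_productOfSums)
    · rw [map_sub, map_zsmul, map_zsmul, phi_pairedProductSum, phi_productOfSums]
    · rw [map_sub, map_zsmul, map_zsmul, piMap_pairedProductSum, piMap_productOfSums,
        Finset.sq_sum_eq_sum_sq_add_two_mul_sum_sum_Ioi]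
      simp only [zsmul_eq_mul]
      push_cast
      ring
end

section
/- Every homogeneous element of degree 3 of the subgroup 𝓘 lies in 𝓛, and conversely 𝓛 ⊆ 𝓘; in other words, the set of homogeneous degree-3 elements of 𝓘 coincides with 𝓛. -/
set_option synthInstance.maxHeartbeats 1000000
set_option maxHeartbeats 1000000

open MvPolynomial QuaternionGroup

/-- The quaternion group `Q₈ = {1, −1, i, −i, j, −j, k, −k}` of order `8`.
Concretely, `1 = a 0`, `−1 = a 2`, `i = a 1`, `−i = a 3`, `j = xa 0`, `−j = xa 2`,
`k = xa 3`, `−k = xa 1`. -/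
abbrev Q8 : Type := QuaternionGroup 2

/-- The polynomial ring `R = ℤ[u_g : g ∈ Q₈]`. -/
abbrev R8 : Type := MvPolynomial Q8 ℤ

/-- The action of `g ∈ Q₈` on `R` by the `ℤ`-algebra automorphism permuting the
variables by left translation: `g • u_h = u_{g h}`. -/
noncomputable def act (g : Q8) : R8 →ₐ[ℤ] R8 :=
  rename (fun h : Q8 => g * h)

noncomputable def eV : R8 := X (a 0)
noncomputable def e'V : R8 := X (a 2)
noncomputable def xV : R8 := X (a 1)
noncomputable def x'V : R8 := X (a 3)
noncomputable def yV : R8 := X (xa 0)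
noncomputable def y'V : R8 := X (xa 2)
noncomputable def zV : R8 := X (xa 3)
noncomputable def z'V : R8 := X (xa 1)

/-- The polynomial `w = xyz + x′y′z′ + e′zy′ + ez′y + z′e′x + zex′ + yx′e′ + y′xe`. -/
noncomputable def w : R8 :=
  xV * yV * zV + x'V * y'V * z'V + e'V * zV * y'V + eV * z'V * yV
    + z'V * e'V * xV + zV * eV * x'V + yV * x'V * e'V + y'V * xV * eV


/-- The generators of the subgroup `𝓛`: the inductions `Ind^{Q₈}_{{±1}}(v·q)
= (v·q) + i·(v·q) + j·(v·q) + k·(v·q)`, where `v ∈ {e+e′, x+x′, y+y′, z+z′}` and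
`q` is a homogeneous polynomial of degree `2` fixed by the action of `−1`. -/
noncomputable def Lgens : Set R8 :=
  {r : R8 | ∃ v ∈ ({eV + e'V, xV + x'V, yV + y'V, zV + z'V} : Set R8),
      ∃ q : R8, q.IsHomogeneous 2 ∧ act (a 2) q = q ∧
        r = v * q + act (a 1) (v * q) + act (xa 0) (v * q) + act (xa 3) (v * q)}

/-- The additive subgroup `𝓛` of `R`. -/
noncomputable def Lgrp : AddSubgroup R8 := AddSubgroup.closure Lgens

/-- The `ℤ`-subalgebra `A ⊆ R` generated by `e+e′, x+x′, y+y′, z+z′`. -/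
noncomputable def Asub : Subalgebra ℤ R8 :=
  Algebra.adjoin ℤ ({eV + e'V, xV + x'V, yV + y'V, zV + z'V} : Set R8)

/-- The induction `Ind^{Q₈}_H(u) = Σ_g g·u` of `u ∈ R` from a subgroup `H ≤ Q₈` to
`Q₈`, the sum running over a set of representatives of the left cosets of `H` in `Q₈`
(for `H`-invariant `u` it is independent of the choice of representatives). -/
noncomputable def ind (H : Subgroup Q8) (u : R8) : R8 :=
  haveI : Fintype (Q8 ⧸ H) := Fintype.ofFinite _
  ∑ c : Q8 ⧸ H, act (Quotient.out c) u

/-- The additive subgroup `𝓘` of `R`, generated by the elements `Ind^{Q₈}_H(p·q)` where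
`H` ranges over all subgroups of `Q₈`, `p ∈ A⁺` is `H`-invariant and `q ∈ R` is
`H`-invariant. -/
noncomputable def Igrp : AddSubgroup R8 := AddSubgroup.closure
  {r : R8 | ∃ (H : Subgroup Q8) (p q : R8),
    p ∈ Asub ∧ MvPolynomial.constantCoeff p = 0 ∧
    (∀ h ∈ H, act h p = p) ∧ (∀ h ∈ H, act h q = q) ∧
    r = ind H (p * q)}

/-!
Every nontrivial subgroup of `Q₈` contains `−1`, which acts trivially on `A`, and the generators
of `𝓛` are the inductions `Ind_{±1}(v q)`. For `H`-invariant `u`, `|H| • Ind_H u` is the full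
orbit sum `∑_{g ∈ Q₈} g u`; hence if `n • p = ∑_{h ∈ H} h r` and `q` is `H`-invariant, then
`n • Ind_H (p q) = ∑_{g ∈ Q₈} g (r q)`.

For `H = 1` this gives `Ind_1 (p q) = Ind_{±1} (p (q + (−1) q))` directly. For `H ∋ −1`, split
`p q` into the pieces `p_i q_{3-i}`. In odd degree `i`, the group `Q₈ / {±1}` acts freely on the
monomials in the four generators of `A`, so `2 p_i = ∑_{h ∈ H} h r` with `r ∈ A`. For `i = 2` the
factor `q_1` is linear and `H` acts freely on the variables, so `q_1 = ∑_{h ∈ H} h s`. Either way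
`Ind_H (p_i q_{3-i}) = Ind_{±1} (r q')` with `r ∈ A⁺` and `q'` fixed by `−1`, and such elements lie
in `𝓛` because every `r ∈ A⁺` has the form `∑ v a` with `a ∈ A`.
-/

open Finset

section Homogeneous

variable {σ R : Type*} [CommSemiring R]

lemma MvPolynomial.IsHomogeneous.of_support_subset {P Q : MvPolynomial σ R} {n : ℕ}
    (hP : P.IsHomogeneous n) (h : Q.support ⊆ P.support) : Q.IsHomogeneous n :=
  fun _ hd => hP (mem_support_iff.1 (h (mem_support_iff.2 hd)))

lemma MvPolynomial.IsHomogeneous.constantCoeff_eq_zero {P : MvPolynomial σ R} {n : ℕ}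
    (hP : P.IsHomogeneous n) (hn : n ≠ 0) : constantCoeff P = 0 := by
  rw [constantCoeff_eq]
  exact hP.coeff_eq_zero (by rw [map_zero]; exact hn.symm)

attribute [local instance] MvPolynomial.gradedAlgebra

lemma homogeneousComponent_mul (n : ℕ) (p q : MvPolynomial σ R) :
    homogeneousComponent n (p * q) =
      ∑ ij ∈ antidiagonal n, homogeneousComponent ij.1 p * homogeneousComponent ij.2 q := by
  simp_rw [← decomposition.decompose'_apply]
  have h := DirectSum.coe_mul_apply_eq_sum_antidiagonal (A := homogeneousSubmodule σ R)
    (DirectSum.decompose (homogeneousSubmodule σ R) p)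
    (DirectSum.decompose (homogeneousSubmodule σ R) q) n
  rw [← DirectSum.decompose_mul] at h
  exact h

lemma homogeneousComponent_add_mul_of_isHomogeneous {p : MvPolynomial σ R} {k : ℕ}
    (hp : p.IsHomogeneous k) (n : ℕ) (q : MvPolynomial σ R) :
    homogeneousComponent (k + n) (p * q) = p * homogeneousComponent n q := by
  simp_rw [← decomposition.decompose'_apply]
  exact DirectSum.coe_decompose_mul_add_of_left_mem (𝒜 := homogeneousSubmodule σ R) hp

lemma aeval_homogeneousComponent {τ : Type*} {f : σ → MvPolynomial τ R}
    (hf : ∀ i, (f i).IsHomogeneous 1) (n : ℕ) (P : MvPolynomial σ R) :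
    aeval f (homogeneousComponent n P) = homogeneousComponent n (aeval f P) := by
  induction P using MvPolynomial.induction_on' with
  | monomial d c =>
    have hd := (isHomogeneous_monomial c (rfl : d.degree = d.degree)).aeval f hf
    rw [one_mul] at hd
    rw [homogeneousComponent_of_mem (isHomogeneous_monomial c rfl),
      homogeneousComponent_of_mem hd]
    split_ifs <;> simp
  | add P Q hP hQ => simp only [map_add, hP, hQ]

end Homogeneous

section Invariants

open MulAction

variable {G : Type*} [Group G]

lemma card_filter_inv_smul_eq {X : Type*} [MulAction G X] [Fintype G] [DecidableEq X] {x y : X}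
    (hy : y ∈ orbit G x) : #{g : G | g⁻¹ • x = y} = Nat.card (stabilizer G x) := by
  obtain ⟨g₀, rfl⟩ := hy
  rw [Nat.card_eq_fintype_card, ← Fintype.card_subtype]
  refine Fintype.card_congr ((Equiv.mulRight g₀).subtypeEquiv fun g => ?_)
  rw [mem_stabilizer_iff, Equiv.coe_mulRight, mul_smul, inv_smul_eq_iff]
  exact eq_comm

attribute [local instance] Finsupp.comapSMul Finsupp.comapMulAction

variable {σ R : Type*} [MulAction G σ] [CommSemiring R]

lemma coeff_rename_smul (g : G) (P : MvPolynomial σ R) (m : σ →₀ ℕ) :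
    coeff m (rename (g • ·) P) = coeff (g⁻¹ • m) P := by
  conv_lhs => rw [← smul_inv_smul g m, Finsupp.comapSMul_def]
  exact coeff_rename_mapDomain _ (MulAction.injective g) _ _

/-- `Q` keeps one monomial of each orbit in the support of `P`; a monomial `m` is then hit by
exactly `|stabilizer G m|` elements of `G`. -/
theorem exists_sum_rename_smul_eq_nsmul [Fintype G] {P : MvPolynomial σ R}
    (hP : ∀ g : G, rename (g • ·) P = P) {n : ℕ}
    (hn : ∀ m ∈ P.support, Nat.card (stabilizer G m) = n) :
    ∃ Q : MvPolynomial σ R, Q.support ⊆ P.support ∧ ∑ g : G, rename (g • ·) Q = n • P := by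
  classical
  let rep : (σ →₀ ℕ) → (σ →₀ ℕ) := fun m => (Quotient.mk (orbitRel G _) m).out
  have rep_smul (g : G) (m) : rep (g • m) = rep m :=
    congrArg Quotient.out (Quotient.sound ⟨g, rfl⟩)
  have rep_mem (m) : rep m ∈ orbit G m := Quotient.mk_out (s := orbitRel G _) m
  have coeff_smul_eq (g : G) (m) : coeff (g • m) P = coeff m P := by
    have := coeff_rename_smul g⁻¹ P m
    rwa [hP, inv_inv, eq_comm] at this
  set Q := ∑ m ∈ P.support with rep m = m, monomial m (coeff m P)
  have coeffQ (m) : coeff m Q = if rep m = m then coeff m P else 0 := by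
    by_cases hm : coeff m P = 0 <;>
      simp [Q, coeff_sum, coeff_monomial, hm]
  refine ⟨Q, fun m hm => ?_, ?_⟩
  · rw [mem_support_iff, coeffQ] at hm
    rw [mem_support_iff]
    exact fun h => hm (by rw [h, ite_self])
  · ext m
    rw [coeff_sum, MvPolynomial.coeff_smul]
    simp only [coeff_rename_smul, coeffQ, rep_smul, coeff_smul_eq]
    by_cases hm : coeff m P = 0
    · simp [hm]
    rw [Finset.sum_ite, Finset.sum_const_zero, add_zero, Finset.sum_const]
    simp_rw [eq_comm (a := rep m)]
    rw [card_filter_inv_smul_eq (rep_mem m), hn m (mem_support_iff.2 hm), nsmul_eq_mul]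

end Invariants

lemma act_mul_apply (g h : Q8) (u : R8) : act (g * h) u = act g (act h u) := by
  simp only [act, rename_rename, Function.comp_def, mul_assoc]

lemma act_one_apply (u : R8) : act 1 u = u := by
  simp only [act, one_mul]
  exact rename_id_apply u

lemma act_X (g h : Q8) : act g (X h) = X (g * h) := rename_X _ _

lemma homogeneousComponent_act (n : ℕ) (g : Q8) (u : R8) :
    homogeneousComponent n (act g u) = act g (homogeneousComponent n u) :=
  (rename_homogeneousComponent n u).symm

lemma act_a_two_add_act_a_two (u : R8) :
    act (a 2) (u + act (a 2) u) = u + act (a 2) u := by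
  rw [map_add, ← act_mul_apply, show (a 2 : Q8) * a 2 = 1 from rfl, act_one_apply, add_comm]

lemma a_two_mem_of_ne_bot {H : Subgroup Q8} (hH : H ≠ ⊥) : a 2 ∈ H := by
  obtain ⟨⟨g, hg⟩, hg1⟩ := (Subgroup.ne_bot_iff_exists_ne_one).1 hH
  have : ∀ g : Q8, g ≠ 1 → g = a 2 ∨ g * g = a 2 := by decide
  rcases this g (by simpa using hg1) with rfl | h
  · exact hg
  · exact h ▸ H.mul_mem hg hg

lemma act_eq_self_of_mem_zpowers {u : R8} (hu : act (a 2) u = u) {h : Q8}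
    (hh : h ∈ Subgroup.zpowers (a 2)) : act h u = u := by
  rw [Subgroup.zpowers_eq_closure] at hh
  induction hh using Subgroup.closure_induction with
  | mem x hx => rwa [Set.mem_singleton_iff.1 hx]
  | one => exact act_one_apply u
  | mul x y _ _ hx hy => rw [act_mul_apply, hy, hx]
  | inv x _ hx => conv_lhs => rw [← hx, ← act_mul_apply, inv_mul_cancel, act_one_apply]

noncomputable def sumAct : R8 →+ R8 where
  toFun u := ∑ g : Q8, act g u
  map_zero' := by simp
  map_add' u v := by simp only [map_add, Finset.sum_add_distrib]

lemma sumAct_apply (u : R8) : sumAct u = ∑ g : Q8, act g u := rfl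

lemma sumAct_act (g : Q8) (u : R8) : sumAct (act g u) = sumAct u := by
  simp only [sumAct_apply, ← act_mul_apply]
  exact Fintype.sum_equiv (Equiv.mulRight g) _ _ fun _ => rfl

noncomputable def indCenter : R8 →+ R8 where
  toFun u := u + act (a 1) u + act (xa 0) u + act (xa 3) u
  map_zero' := by simp
  map_add' u v := by simp only [map_add]; abel

lemma homogeneousComponent_indCenter (n : ℕ) (u : R8) :
    homogeneousComponent n (indCenter u) = indCenter (homogeneousComponent n u) := by
  simp only [indCenter, AddMonoidHom.coe_mk, ZeroHom.coe_mk, map_add, homogeneousComponent_act]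

lemma sumAct_eq_indCenter (u : R8) : sumAct u = indCenter (u + act (a 2) u) := by
  have huniv : (Finset.univ : Finset Q8) = {1, a 1, a 2, a 3, xa 0, xa 1, xa 2, xa 3} := by
    decide
  rw [sumAct_apply, huniv, Finset.sum_insert (by decide), Finset.sum_insert (by decide),
    Finset.sum_insert (by decide), Finset.sum_insert (by decide), Finset.sum_insert (by decide),
    Finset.sum_insert (by decide), Finset.sum_insert (by decide), Finset.sum_singleton]
  simp only [indCenter, AddMonoidHom.coe_mk, ZeroHom.coe_mk, map_add, ← act_mul_apply,
    act_one_apply]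
  rw [show (a 1 : Q8) * a 2 = a 3 from rfl, show (xa 0 : Q8) * a 2 = xa 2 from rfl,
    show (xa 3 : Q8) * a 2 = xa 1 from rfl]
  abel

lemma card_smul_ind (H : Subgroup Q8) {u : R8} (hu : ∀ h ∈ H, act h u = u) :
    Nat.card H • ind H u = sumAct u := by
  let _ : Fintype (Q8 ⧸ H) := Fintype.ofFinite _
  let _ : Fintype H := Fintype.ofFinite _
  have hbij : Function.Bijective fun x : (Q8 ⧸ H) × H => x.1.out * x.2 := by
    refine (Fintype.bijective_iff_injective_and_card _).2 ⟨fun x y hxy => ?_, ?_⟩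
    · have h₁ : x.1 = y.1 := by
        simpa [QuotientGroup.mk_mul_of_mem] using congrArg (QuotientGroup.mk (s := H)) hxy
      obtain ⟨c, h⟩ := x
      obtain ⟨c', h'⟩ := y
      dsimp only at h₁ hxy
      subst h₁
      exact Prod.ext rfl (Subtype.ext (mul_left_cancel hxy))
    · simp only [← Nat.card_eq_fintype_card, Nat.card_prod]
      exact (Subgroup.card_eq_card_quotient_mul_card_subgroup H).symm
  calc Nat.card H • ind H u = ∑ x : (Q8 ⧸ H) × H, act (x.1.out * x.2) u := by
        simp [ind, Fintype.sum_prod_type, act_mul_apply, hu, Finset.smul_sum,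
          Nat.card_eq_fintype_card]
    _ = sumAct u := Fintype.sum_bijective _ hbij _ _ fun _ => rfl

lemma nsmul_ind_eq_sumAct {H : Subgroup Q8} [Fintype H] {u r : R8} {n : ℕ}
    (hu : ∀ h ∈ H, act h u = u) (hr : n • u = ∑ h : H, act h r) :
    n • ind H u = sumAct r := by
  refine IsAddTorsionFree.nsmul_right_injective (Nat.card_pos (α := H)).ne' ?_
  simp only
  rw [smul_comm, card_smul_ind H hu, ← map_nsmul, hr, map_sum]
  simp [sumAct_act, Nat.card_eq_fintype_card]

lemma ind_bot (u : R8) : ind ⊥ u = sumAct u := by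
  rw [← one_nsmul (ind ⊥ u), ← Subgroup.card_bot (G := Q8),
    card_smul_ind ⊥ fun h hh => by rw [Subgroup.mem_bot.1 hh, act_one_apply]]

lemma ind_zpowers_eq_indCenter {u : R8} (hu : act (a 2) u = u) :
    ind (Subgroup.zpowers (a 2)) u = indCenter u := by
  have hcard : Nat.card (Subgroup.zpowers (a 2 : Q8)) = 2 := by
    rw [Nat.card_zpowers, orderOf_eq_prime (p := 2) (by decide) (by decide)]
  have key := card_smul_ind _ fun h hh => act_eq_self_of_mem_zpowers hu hh
  rw [hcard, sumAct_eq_indCenter, hu, ← two_nsmul, map_nsmul] at key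
  exact IsAddTorsionFree.nsmul_right_injective two_ne_zero key

lemma ind_sum {ι : Type*} (H : Subgroup Q8) (s : Finset ι) (f : ι → R8) :
    ind H (∑ i ∈ s, f i) = ∑ i ∈ s, ind H (f i) := by
  simp only [ind, map_sum]
  exact Finset.sum_comm

lemma homogeneousComponent_ind (n : ℕ) (H : Subgroup Q8) (u : R8) :
    homogeneousComponent n (ind H u) = ind H (homogeneousComponent n u) := by
  simp only [ind, map_sum, homogeneousComponent_act]

/-- The class of `g` modulo `{±1}`: `±1 ↦ 0`, `±i ↦ 1`, `±j ↦ 2`, `±k ↦ 3`. -/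
def pmClass : Q8 → Fin 4
  | a i => if i.val % 2 = 0 then 0 else 1
  | xa i => if i.val % 2 = 0 then 2 else 3

def pmRep : Fin 4 → Q8 := ![1, a 1, xa 0, xa 3]

/-- Left translation of `Q₈` on `Q₈ / {±1}`; it permutes the generators `vGen` of `A`. -/
instance : MulAction Q8 (Fin 4) where
  smul g l := pmClass (g * pmRep l)
  one_smul := by decide
  mul_smul := by decide

noncomputable def vGen (l : Fin 4) : R8 := X (pmRep l) + X (a 2 * pmRep l)

lemma act_vGen (g : Q8) (l : Fin 4) : act g (vGen l) = vGen (g • l) := by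
  have key : ∀ (g : Q8) (l : Fin 4),
      (g * pmRep l = pmRep (g • l) ∧ g * (a 2 * pmRep l) = a 2 * pmRep (g • l)) ∨
      (g * pmRep l = a 2 * pmRep (g • l) ∧ g * (a 2 * pmRep l) = pmRep (g • l)) := by decide
  rcases key g l with ⟨h₁, h₂⟩ | ⟨h₁, h₂⟩ <;>
    simp only [vGen, map_add, act_X, h₁, h₂, add_comm]

lemma range_vGen : Set.range vGen = {eV + e'V, xV + x'V, yV + y'V, zV + z'V} := by
  have h0 : vGen 0 = eV + e'V := rfl
  have h1 : vGen 1 = xV + x'V := rfl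
  have h2 : vGen 2 = yV + y'V := rfl
  have h3 : vGen 3 = zV + z'V := rfl
  ext u
  simp [Fin.exists_fin_succ, ← h0, ← h1, ← h2, ← h3, eq_comm]

lemma isHomogeneous_vGen (l : Fin 4) : (vGen l).IsHomogeneous 1 :=
  (isHomogeneous_X _ _).add (isHomogeneous_X _ _)

noncomputable def aevalGen : MvPolynomial (Fin 4) ℤ →ₐ[ℤ] R8 := aeval vGen

lemma act_aevalGen (g : Q8) (P : MvPolynomial (Fin 4) ℤ) :
    act g (aevalGen P) = aevalGen (rename (g • ·) P) := by
  have : (act g).comp aevalGen = aevalGen.comp (rename (g • ·)) :=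
    algHom_ext fun l => by simp [aevalGen, act_vGen]
  exact DFunLike.congr_fun this P

lemma aevalGen_injective : Function.Injective aevalGen := by
  let π : R8 →ₐ[ℤ] MvPolynomial (Fin 4) ℤ :=
    aeval fun g => if pmRep (pmClass g) = g then X (pmClass g) else 0
  have key : ∀ l : Fin 4,
      pmClass (pmRep l) = l ∧ pmClass (a 2 * pmRep l) = l ∧ a 2 * pmRep l ≠ pmRep l := by
    decide
  have : π.comp aevalGen = AlgHom.id ℤ _ :=
    algHom_ext fun l => by simp [π, aevalGen, vGen, key l, (key l).2.2.symm]
  exact Function.LeftInverse.injective (g := π) (DFunLike.congr_fun this)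

lemma aevalGen_homogeneousComponent (n : ℕ) (P : MvPolynomial (Fin 4) ℤ) :
    aevalGen (homogeneousComponent n P) = homogeneousComponent n (aevalGen P) :=
  aeval_homogeneousComponent isHomogeneous_vGen n P

lemma mem_Asub_iff {p : R8} : p ∈ Asub ↔ ∃ P, aevalGen P = p := by
  rw [Asub, ← range_vGen, Algebra.adjoin_range_eq_range_aeval, AlgHom.mem_range]
  rfl

lemma act_a_two_of_mem_Asub {p : R8} (hp : p ∈ Asub) : act (a 2) p = p := by
  obtain ⟨P, rfl⟩ := mem_Asub_iff.1 hp
  have : (fun l : Fin 4 => a 2 • l) = id := funext (by decide : ∀ l : Fin 4, (a 2 : Q8) • l = l)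
  rw [act_aevalGen, this, rename_id_apply]

lemma homogeneousComponent_mem_Asub {p : R8} (hp : p ∈ Asub) (n : ℕ) :
    homogeneousComponent n p ∈ Asub := by
  obtain ⟨P, rfl⟩ := mem_Asub_iff.1 hp
  exact mem_Asub_iff.2 ⟨_, aevalGen_homogeneousComponent n P⟩

lemma exists_eq_sum_vGen_mul {p : R8} (hp : p ∈ Asub) (hcc : constantCoeff p = 0) :
    ∃ b : Fin 4 → R8, (∀ l, b l ∈ Asub) ∧ p = ∑ l, vGen l * b l := by
  obtain ⟨P, rfl⟩ := mem_Asub_iff.1 hp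
  have hP : coeff 0 P = 0 := by
    have h := aevalGen_homogeneousComponent 0 P
    rw [constantCoeff_eq] at hcc
    rwa [homogeneousComponent_zero, homogeneousComponent_zero, hcc, aevalGen, aeval_C,
      algebraMap_eq, C_inj] at h
  have hspan : P ∈ Ideal.span (Set.range X) := by
    rw [← Set.image_univ, mem_ideal_span_X_image]
    intro m hm
    obtain ⟨l, hl⟩ : ∃ l, m l ≠ 0 := by
      by_contra! h
      exact mem_support_iff.1 hm (by rwa [show m = 0 from Finsupp.ext h])
    exact ⟨l, Set.mem_univ l, hl⟩
  obtain ⟨c, hc⟩ := Ideal.mem_span_range_iff_exists_fun.1 hspan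
  refine ⟨fun l => aevalGen (c l), fun l => mem_Asub_iff.2 ⟨c l, rfl⟩, ?_⟩
  rw [← hc, map_sum]
  simp only [map_mul, aevalGen, aeval_X, mul_comm]

theorem homogeneousComponent_three_indCenter_mem_Lgrp {p q : R8} (hp : p ∈ Asub)
    (hcc : constantCoeff p = 0) (hq : act (a 2) q = q) :
    homogeneousComponent 3 (indCenter (p * q)) ∈ Lgrp := by
  obtain ⟨b, hb, rfl⟩ := exists_eq_sum_vGen_mul hp hcc
  simp only [Finset.sum_mul, mul_assoc, map_sum, homogeneousComponent_indCenter]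
  refine sum_mem fun l _ => AddSubgroup.subset_closure ?_
  rw [show 3 = 1 + 2 from rfl,
    homogeneousComponent_add_mul_of_isHomogeneous (isHomogeneous_vGen l)]
  refine ⟨vGen l, range_vGen ▸ ⟨l, rfl⟩, _, homogeneousComponent_isHomogeneous 2 _, ?_, rfl⟩
  rw [← homogeneousComponent_act, map_mul, act_a_two_of_mem_Asub (hb l), hq]

theorem indCenter_mem_Lgrp {p q : R8} (hp : p ∈ Asub) (hcc : constantCoeff p = 0)
    (hq : act (a 2) q = q) (hpq : (p * q).IsHomogeneous 3) : indCenter (p * q) ∈ Lgrp := by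
  simpa [homogeneousComponent_indCenter, homogeneousComponent_eq_self hpq] using
    homogeneousComponent_three_indCenter_mem_Lgrp hp hcc hq

section Splitting

open MulAction

attribute [local instance] Finsupp.comapSMul Finsupp.comapMulAction

lemma smul_eq_self_iff_of_odd_degree {m : Fin 4 →₀ ℕ} (hm : Odd m.degree) (g : Q8) :
    g • m = m ↔ g = 1 ∨ g = a 2 := by
  constructor
  · intro hg
    have hfix (l : Fin 4) : m (g⁻¹ • l) = m l := by
      rw [← Finsupp.comapSMul_apply, hg]
    have key : ∀ g : Q8, g = 1 ∨ g = a 2 ∨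
        (g⁻¹ • (0 : Fin 4) = 1 ∧ g⁻¹ • (2 : Fin 4) = 3) ∨
        (g⁻¹ • (0 : Fin 4) = 2 ∧ g⁻¹ • (1 : Fin 4) = 3) ∨
        (g⁻¹ • (0 : Fin 4) = 3 ∧ g⁻¹ • (1 : Fin 4) = 2) := by
      decide
    rw [Finsupp.degree_eq_sum, Fin.sum_univ_four] at hm
    rcases key g with h | h | ⟨h₀, h₁⟩ | ⟨h₀, h₁⟩ | ⟨h₀, h₁⟩
    · exact Or.inl h
    · exact Or.inr h
    · have e₀ := hfix 0
      have e₁ := hfix 2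
      rw [h₀] at e₀
      rw [h₁] at e₁
      exact absurd hm (Nat.not_odd_iff_even.2 ⟨m 0 + m 2, by omega⟩)
    all_goals
      have e₀ := hfix 0
      have e₁ := hfix 1
      rw [h₀] at e₀
      rw [h₁] at e₁
      exact absurd hm (Nat.not_odd_iff_even.2 ⟨m 0 + m 1, by omega⟩)
  · rintro (rfl | rfl)
    · exact one_smul _ m
    · ext l
      rw [Finsupp.comapSMul_apply, (by decide : ∀ l : Fin 4, (a 2 : Q8)⁻¹ • l = l)]

lemma card_stabilizer_of_odd_degree {H : Subgroup Q8} (ha2 : a 2 ∈ H) {m : Fin 4 →₀ ℕ}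
    (hm : Odd m.degree) : Nat.card (stabilizer H m) = 2 := by
  rw [Nat.card_eq_two_iff]
  refine ⟨1, ⟨⟨a 2, ha2⟩, (smul_eq_self_iff_of_odd_degree hm _).2 (Or.inr rfl)⟩, ?_, ?_⟩
  · intro h
    have : (1 : Q8) = a 2 := congrArg (fun x : stabilizer H m => ((x : H) : Q8)) h
    exact absurd this (by decide)
  · ext ⟨⟨g, hgH⟩, hg⟩
    simp only [Set.mem_insert_iff, Set.mem_singleton_iff, Set.mem_univ, iff_true]
    rcases (smul_eq_self_iff_of_odd_degree hm g).1 hg with rfl | rfl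
    · left; rfl
    · right; rfl

lemma card_stabilizer_single (H : Subgroup Q8) (g : Q8) :
    Nat.card (stabilizer H (Finsupp.single g 1)) = 1 := by
  have : stabilizer H (Finsupp.single g 1) = ⊥ := by
    rw [Subgroup.eq_bot_iff_forall]
    intro h hh
    rw [mem_stabilizer_iff, Finsupp.comapSMul_single] at hh
    exact Subtype.ext (mul_eq_right.1 (Finsupp.single_left_injective one_ne_zero hh))
  rw [this, Subgroup.card_bot]

lemma exists_two_nsmul_eq_sum_act {H : Subgroup Q8} [Fintype H] (ha2 : a 2 ∈ H) {p : R8}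
    (hp : p ∈ Asub) {d : ℕ} (hd : Odd d) (hpd : p.IsHomogeneous d)
    (hpH : ∀ h ∈ H, act h p = p) :
    ∃ r ∈ Asub, r.IsHomogeneous d ∧ 2 • p = ∑ h : H, act h r := by
  obtain ⟨P, hPd, rfl⟩ : ∃ P, P.IsHomogeneous d ∧ aevalGen P = p := by
    obtain ⟨P, rfl⟩ := mem_Asub_iff.1 hp
    exact ⟨_, homogeneousComponent_isHomogeneous d P,
      by rw [aevalGen_homogeneousComponent, homogeneousComponent_eq_self hpd]⟩
  have hPH (h : H) : rename (h • ·) P = P :=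
    aevalGen_injective ((act_aevalGen h P).symm.trans (hpH h h.2))
  obtain ⟨R, hRP, hR⟩ := exists_sum_rename_smul_eq_nsmul hPH fun m hm =>
    card_stabilizer_of_odd_degree ha2
      (by rwa [Finsupp.degree_apply, ← hPd.degree_eq_sum_deg_support hm])
  refine ⟨aevalGen R, mem_Asub_iff.2 ⟨R, rfl⟩, ?_, ?_⟩
  · have := (hPd.of_support_subset hRP).aeval vGen isHomogeneous_vGen
    rwa [one_mul] at this
  · rw [← map_nsmul, ← hR, map_sum]
    exact Finset.sum_congr rfl fun h _ => (act_aevalGen h R).symm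

lemma exists_eq_sum_act_of_isHomogeneous_one {H : Subgroup Q8} [Fintype H] {q : R8}
    (hq : q.IsHomogeneous 1) (hqH : ∀ h ∈ H, act h q = q) :
    ∃ s : R8, s.IsHomogeneous 1 ∧ q = ∑ h : H, act h s := by
  obtain ⟨s, hsq, hs⟩ := exists_sum_rename_smul_eq_nsmul (G := H) (fun h => hqH h h.2)
    fun m hm => by
      obtain ⟨g, rfl⟩ : m ∈ Set.range (Finsupp.single · 1) := by
        rw [Finsupp.range_single_one]
        exact (Finsupp.degree_apply m).trans (hq.degree_eq_sum_deg_support hm).symm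
      exact card_stabilizer_single H g
  exact ⟨s, hq.of_support_subset hsq, by rw [← one_smul ℕ q, ← hs]; rfl⟩

end Splitting

lemma ind_mem_Lgrp_of_odd {H : Subgroup Q8} (ha2 : a 2 ∈ H) {p q : R8} {i j : ℕ}
    (hij : i + j = 3) (hi : Odd i) (hp : p ∈ Asub) (hpi : p.IsHomogeneous i)
    (hqj : q.IsHomogeneous j) (hpH : ∀ h ∈ H, act h p = p) (hqH : ∀ h ∈ H, act h q = q) :
    ind H (p * q) ∈ Lgrp := by
  classical
  obtain ⟨r, hrA, hri, hr⟩ := exists_two_nsmul_eq_sum_act ha2 hp hi hpi hpH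
  have hq2 := hqH _ ha2
  have hrq : act (a 2) (r * q) = r * q := by rw [map_mul, act_a_two_of_mem_Asub hrA, hq2]
  have key : 2 • ind H (p * q) = 2 • indCenter (r * q) := by
    rw [nsmul_ind_eq_sumAct (fun h hh => by rw [map_mul, hpH h hh, hqH h hh]) (r := r * q),
      sumAct_eq_indCenter, hrq, ← two_nsmul, map_nsmul]
    rw [← smul_mul_assoc, hr, Finset.sum_mul]
    exact Finset.sum_congr rfl fun h _ => by rw [map_mul, hqH h h.2]
  rw [IsAddTorsionFree.nsmul_right_injective two_ne_zero key]
  exact indCenter_mem_Lgrp hrA (hri.constantCoeff_eq_zero hi.pos.ne') hq2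
    (hij ▸ hri.mul hqj)

lemma ind_mem_Lgrp_of_isHomogeneous_one {H : Subgroup Q8} {p q : R8} (hp : p ∈ Asub)
    (hp2 : p.IsHomogeneous 2) (hq1 : q.IsHomogeneous 1) (hpH : ∀ h ∈ H, act h p = p)
    (hqH : ∀ h ∈ H, act h q = q) : ind H (p * q) ∈ Lgrp := by
  classical
  obtain ⟨s, hs1, rfl⟩ := exists_eq_sum_act_of_isHomogeneous_one hq1 hqH
  have key : 1 • ind H (p * ∑ h : H, act h s) = indCenter (p * (s + act (a 2) s)) := by
    rw [nsmul_ind_eq_sumAct (fun h hh => by rw [map_mul, hpH h hh, hqH h hh]) (r := p * s),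
      sumAct_eq_indCenter, map_mul, act_a_two_of_mem_Asub hp, mul_add]
    rw [one_nsmul, Finset.mul_sum]
    exact Finset.sum_congr rfl fun h _ => by rw [map_mul, hpH h h.2]
  rw [one_nsmul] at key
  rw [key]
  exact indCenter_mem_Lgrp hp (hp2.constantCoeff_eq_zero two_ne_zero)
    (act_a_two_add_act_a_two s) (hp2.mul (hs1.add hs1.rename_isHomogeneous))

lemma ind_mem_Lgrp_of_isHomogeneous {H : Subgroup Q8} (ha2 : a 2 ∈ H) {p q : R8} {i j : ℕ}
    (hij : i + j = 3) (hp : p ∈ Asub) (hcc : constantCoeff p = 0) (hpi : p.IsHomogeneous i)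
    (hqj : q.IsHomogeneous j) (hpH : ∀ h ∈ H, act h p = p) (hqH : ∀ h ∈ H, act h q = q) :
    ind H (p * q) ∈ Lgrp := by
  obtain rfl | rfl | rfl | rfl : i = 0 ∨ i = 1 ∨ i = 2 ∨ i = 3 := by omega
  · have : p = 0 := by
      rw [← homogeneousComponent_eq_self hpi, homogeneousComponent_zero, ← constantCoeff_eq,
        hcc, C_0]
    simp [this, ind]
  · exact ind_mem_Lgrp_of_odd ha2 hij odd_one hp hpi hqj hpH hqH
  · exact ind_mem_Lgrp_of_isHomogeneous_one hp hpi (by rwa [show j = 1 by omega] at hqj) hpH hqH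
  · exact ind_mem_Lgrp_of_odd ha2 hij (by decide) hp hpi hqj hpH hqH

theorem homogeneousComponent_three_ind_mem_Lgrp (H : Subgroup Q8) {p q : R8} (hp : p ∈ Asub)
    (hcc : constantCoeff p = 0) (hpH : ∀ h ∈ H, act h p = p) (hqH : ∀ h ∈ H, act h q = q) :
    homogeneousComponent 3 (ind H (p * q)) ∈ Lgrp := by
  rcases eq_or_ne H ⊥ with rfl | hH
  · rw [ind_bot, sumAct_eq_indCenter, map_mul, act_a_two_of_mem_Asub hp, ← mul_add]
    exact homogeneousComponent_three_indCenter_mem_Lgrp hp hcc (act_a_two_add_act_a_two q)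
  · rw [homogeneousComponent_ind, homogeneousComponent_mul, ind_sum]
    refine sum_mem fun ij hij => ind_mem_Lgrp_of_isHomogeneous (a_two_mem_of_ne_bot hH)
      (mem_antidiagonal.1 hij) (homogeneousComponent_mem_Asub hp _) ?_
      (homogeneousComponent_isHomogeneous _ _) (homogeneousComponent_isHomogeneous _ _)
      (fun h hh => by rw [← homogeneousComponent_act, hpH h hh])
      (fun h hh => by rw [← homogeneousComponent_act, hqH h hh])
    rw [constantCoeff_eq, coeff_homogeneousComponent, ← constantCoeff_eq, hcc, ite_self]

/-- Every homogeneous element of degree `3` of the subgroup `𝓘` lies in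
`𝓛`, and conversely `𝓛 ⊆ 𝓘`; in other words, the set of homogeneous degree-3 elements
of `𝓘` coincides with `𝓛`. -/
theorem stmt10 :
    (∀ r ∈ Igrp, r.IsHomogeneous 3 → r ∈ Lgrp) ∧ Lgrp ≤ Igrp := by
  refine ⟨fun r hr hr3 => ?_, (AddSubgroup.closure_le _).2 ?_⟩
  · have hle : Igrp ≤ Lgrp.comap (homogeneousComponent 3).toAddMonoidHom := by
      refine (AddSubgroup.closure_le _).2 ?_
      rintro _ ⟨H, p, q, hp, hcc, hpH, hqH, rfl⟩
      exact homogeneousComponent_three_ind_mem_Lgrp H hp hcc hpH hqH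
    simpa [homogeneousComponent_eq_self hr3] using hle hr
  · rintro _ ⟨v, hv, q, -, hq, rfl⟩
    obtain ⟨l, rfl⟩ : v ∈ Set.range vGen := range_vGen ▸ hv
    have hvA : vGen l ∈ Asub := Algebra.subset_adjoin hv
    have hvq : act (a 2) (vGen l * q) = vGen l * q := by
      rw [map_mul, act_a_two_of_mem_Asub hvA, hq]
    exact AddSubgroup.subset_closure ⟨_, _, q, hvA,
      (isHomogeneous_vGen l).constantCoeff_eq_zero one_ne_zero,
      fun h hh => act_eq_self_of_mem_zpowers (act_a_two_of_mem_Asub hvA) hh,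
      fun h hh => act_eq_self_of_mem_zpowers hq hh, (ind_zpowers_eq_indCenter hvq).symm⟩
end

section
/- Let g ∈ {i, j, k} and let H = {1, −1, g, −g} be the corresponding cyclic subgroup of order 4 of Q₈. For d ∈ {1, 3}, every homogeneous element of degree d of the subalgebra A that is fixed by the action of every element of H can be written as u + g·u for some homogeneous element u ∈ A of degree d with zero constant term. -/
set_option synthInstance.maxHeartbeats 1000000
set_option maxHeartbeats 1000000

open MvPolynomial QuaternionGroup

/-! Sending `X i` to `u_h + u_{-h}`, for `h` running over representatives of the four cosets of
`{±1}` in `Q₈`, identifies `ℤ[X₀, …, X₃]` with `A` as graded rings, and `g` acts on it by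
renaming the variables along the permutation `τ` by which `g` permutes the cosets. For `g ≠ ±1`
this `τ` is a fixed-point-free involution, so monomials fixed by `τ` have even degree. In odd
degree the monomials of a `τ`-invariant polynomial therefore fall into free orbits `{m, τ m}` with
equal coefficients, and `u` collects one monomial from each orbit. -/

theorem Finsupp.even_degree_of_mapDomain_eq {σ : Type*} {τ : σ → σ}
    (hτ : Function.Involutive τ) (hfree : ∀ i, τ i ≠ i) {m : σ →₀ ℕ}
    (hm : m.mapDomain τ = m) : Even m.degree := by
  have hτm (i : σ) : m (τ i) = m i := by
    conv_lhs => rw [← hm]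
    exact Finsupp.mapDomain_apply hτ.injective m i
  rw [← ZMod.natCast_eq_zero_iff_even, Finsupp.degree_apply, Nat.cast_sum]
  refine Finset.sum_involution (fun i _ => τ i) (fun i _ => ?_) (fun i _ _ => hfree i)
    (fun i hi => by simpa [hτm] using hi) (fun i _ => hτ i)
  rw [hτm, ← two_mul, show (2 : ZMod 2) = 0 from rfl, zero_mul]

namespace MvPolynomial

variable {σ ι R : Type*} [CommSemiring R]

theorem homogeneousComponent_aeval {g : ι → MvPolynomial σ R}
    (hg : ∀ i, (g i).IsHomogeneous 1) (n : ℕ) (p : MvPolynomial ι R) :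
    homogeneousComponent n (aeval g p) = aeval g (homogeneousComponent n p) := by
  induction p using MvPolynomial.induction_on' with
  | monomial d c =>
    have hd : (aeval g (monomial d c)).IsHomogeneous d.degree := by
      simpa using (isHomogeneous_monomial c rfl).aeval g hg
    rw [homogeneousComponent_of_mem hd, homogeneousComponent_of_mem (isHomogeneous_monomial c rfl)]
    split_ifs <;> simp
  | add p q hp hq => simp only [map_add, hp, hq]

theorem IsHomogeneous.of_aeval {g : ι → MvPolynomial σ R} (hg : ∀ i, (g i).IsHomogeneous 1)
    (hinj : Function.Injective (MvPolynomial.aeval (R := R) g)) {n : ℕ} {p : MvPolynomial ι R}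
    (hp : (MvPolynomial.aeval g p).IsHomogeneous n) : p.IsHomogeneous n := by
  have : MvPolynomial.aeval g p = MvPolynomial.aeval g (homogeneousComponent n p) := by
    rw [← homogeneousComponent_aeval hg, homogeneousComponent_eq_self hp]
  exact hinj this ▸ homogeneousComponent_isHomogeneous n p

theorem injective_aeval_X_add_X {v v' : ι → σ} (hv : Function.Injective v)
    (hv' : ∀ i j, v' i ≠ v j) :
    Function.Injective (aeval (R := R) fun i => (X (v i) + X (v' i) : MvPolynomial σ R)) := by
  classical
  let back : MvPolynomial σ R →ₐ[R] MvPolynomial ι R := aeval (Function.extend v X 0)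
  have hback : back.comp (aeval fun i => X (v i) + X (v' i)) = AlgHom.id R _ :=
    algHom_ext fun i => by
      simp [back, hv.extend_apply, Function.extend_apply' _ _ _ fun ⟨j, hj⟩ => hv' i j hj.symm]
  exact Function.LeftInverse.injective (g := back) (AlgHom.congr_fun hback)


theorem exists_eq_add_rename_of_involutive {τ : σ → σ} (hτ : Function.Involutive τ)
    {q : MvPolynomial σ R} (hq : rename τ q = q) (hfree : ∀ m ∈ q.support, m.mapDomain τ ≠ m) :
    ∃ r : MvPolynomial σ R, r.support ⊆ q.support ∧ q = r + rename τ r := by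
  classical
  have hσσ (m : σ →₀ ℕ) : (m.mapDomain τ).mapDomain τ = m := by
    rw [← Finsupp.mapDomain_comp, hτ.comp_self, Finsupp.mapDomain_id]
  have hcoeff_rename (p : MvPolynomial σ R) (m : σ →₀ ℕ) :
      coeff m (rename τ p) = coeff (m.mapDomain τ) p := by
    conv_lhs => rw [← hσσ m]
    exact coeff_rename_mapDomain τ hτ.injective p _
  -- `r` keeps one monomial of each orbit `{m, τ m}`, the smaller one for an arbitrary linear order
  let P (m : σ →₀ ℕ) : Prop := embeddingToCardinal m < embeddingToCardinal (m.mapDomain τ)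
  let r := ∑ m ∈ q.support with P m, monomial m (coeff m q)
  have hr (m : σ →₀ ℕ) : coeff m r = if P m then coeff m q else 0 := by
    simp only [r, coeff_sum, coeff_monomial, Finset.sum_ite_eq', Finset.mem_filter, mem_support_iff]
    by_cases hm : coeff m q = 0 <;> simp [hm]
  refine ⟨r, fun m hm => ?_, ?_⟩
  · rw [mem_support_iff, hr] at hm
    exact mem_support_iff.mpr (ite_ne_right_iff.mp hm).2
  ext m
  have hqm : coeff (m.mapDomain τ) q = coeff m q := by rw [← hcoeff_rename, hq]
  rw [coeff_add, hcoeff_rename, hr, hr, hqm]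
  by_cases hm : coeff m q = 0
  · simp [hm]
  have hne := embeddingToCardinal.injective.ne (hfree m (mem_support_iff.mpr hm))
  rcases hne.lt_or_gt with h | h <;> simp [P, hσσ, h, h.not_gt]

end MvPolynomial

def cosetRep : Fin 4 → Q8 := ![a 0, a 1, xa 0, xa 3]

-- `cosetIndex h` is the index in `cosetRep` of the coset `{h, −h}`.
def cosetIndex : Q8 → Fin 4
  | a i => if i = 0 ∨ i = 2 then 0 else 1
  | xa i => if i = 0 ∨ i = 2 then 2 else 3

def cosetPerm (g : Q8) (i : Fin 4) : Fin 4 := cosetIndex (g * cosetRep i)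

lemma cosetRep_injective : Function.Injective cosetRep := by decide

lemma a_two_mul_cosetRep_ne (i j : Fin 4) : a 2 * cosetRep i ≠ cosetRep j := by
  revert i j; decide

lemma cosetRep_cosetIndex (h : Q8) :
    cosetRep (cosetIndex h) = h ∨ a 2 * cosetRep (cosetIndex h) = h := by
  revert h; decide

lemma mul_a_two_mul (g h : Q8) : g * (a 2 * h) = a 2 * (g * h) := by
  revert g h; decide

lemma a_two_mul_a_two_mul (h : Q8) : a 2 * (a 2 * h) = h := by
  revert h; decide

lemma cosetPerm_involutive (g : Q8) : Function.Involutive (cosetPerm g) := by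
  intro i; revert g i; decide

lemma cosetPerm_ne_self {g : Q8} (h₁ : g ≠ 1) (h₂ : g ≠ a 2) (i : Fin 4) : cosetPerm g i ≠ i := by
  revert g i; decide

noncomputable def cosetSum (i : Fin 4) : R8 := X (cosetRep i) + X (a 2 * cosetRep i)

lemma cosetSum_isHomogeneous (i : Fin 4) : (cosetSum i).IsHomogeneous 1 :=
  (isHomogeneous_X _ _).add (isHomogeneous_X _ _)

lemma injective_aeval_cosetSum : Function.Injective (aeval (R := ℤ) cosetSum) :=
  injective_aeval_X_add_X cosetRep_injective a_two_mul_cosetRep_ne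

lemma Asub_eq_range : Asub = (aeval cosetSum).range := by
  rw [Asub, ← Algebra.adjoin_range_eq_range_aeval]
  have : cosetSum = ![eV + e'V, xV + x'V, yV + y'V, zV + z'V] := by
    funext i; fin_cases i <;> rfl
  rw [this]
  simp only [Matrix.range_cons, Matrix.range_empty, Set.union_empty, Set.singleton_union]

lemma X_add_X_a_two_mul (h : Q8) : (X h + X (a 2 * h) : R8) = cosetSum (cosetIndex h) := by
  rcases cosetRep_cosetIndex h with e | e
  · rw [cosetSum, e]
  · conv_lhs => rw [← e, a_two_mul_a_two_mul]
    exact add_comm _ _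

lemma act_aeval_cosetSum (g : Q8) (q : MvPolynomial (Fin 4) ℤ) :
    act g (aeval cosetSum q) = aeval cosetSum (rename (cosetPerm g) q) := by
  change (act g).comp (aeval cosetSum) q = (aeval cosetSum).comp (rename (cosetPerm g)) q
  refine AlgHom.congr_fun (algHom_ext fun i => ?_) q
  rw [AlgHom.comp_apply, AlgHom.comp_apply, rename_X, aeval_X, aeval_X, cosetPerm,
    ← X_add_X_a_two_mul, cosetSum, map_add, act, rename_X, rename_X, mul_a_two_mul]

/-- Let `g ∈ {i, j, k}` and let `H = {1, −1, g, −g}` be the corresponding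
cyclic subgroup of order `4` of `Q₈` (the subgroup generated by `g`).  For `d ∈ {1, 3}`,
every homogeneous element of degree `d` of the subalgebra `A` that is fixed by the
action of every element of `H` can be written as `u + g·u` for some homogeneous element
`u ∈ A` of degree `d` with zero constant term. -/
theorem stmt12 (g : Q8) (hg : g = a 1 ∨ g = xa 0 ∨ g = xa 3)
    (d : ℕ) (hd : d = 1 ∨ d = 3) (p : R8) (hpA : p ∈ Asub)
    (hph : p.IsHomogeneous d)
    (hinv : ∀ h ∈ Subgroup.zpowers g, act h p = p) :
    ∃ u ∈ Asub, u.IsHomogeneous d ∧ MvPolynomial.constantCoeff u = 0 ∧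
      p = u + act g u := by
  have hodd : Odd d := by rcases hd with rfl | rfl <;> decide
  have hg_ne : g ≠ 1 ∧ g ≠ a 2 := by rcases hg with rfl | rfl | rfl <;> decide
  obtain ⟨q, rfl⟩ := (AlgHom.mem_range _).mp (Asub_eq_range ▸ hpA)
  have hq : q.IsHomogeneous d := hph.of_aeval cosetSum_isHomogeneous injective_aeval_cosetSum
  have hqτ : rename (cosetPerm g) q = q :=
    injective_aeval_cosetSum (by rw [← act_aeval_cosetSum, hinv g (Subgroup.mem_zpowers g)])
  have hfree (m) (hm : m ∈ q.support) : m.mapDomain (cosetPerm g) ≠ m := fun hfix => by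
    have hdeg : m.degree = d := by
      rw [Finsupp.degree_eq_weight_one]; exact hq (mem_support_iff.mp hm)
    have heven := Finsupp.even_degree_of_mapDomain_eq (cosetPerm_involutive g)
      (cosetPerm_ne_self hg_ne.1 hg_ne.2) hfix
    exact Nat.not_even_iff_odd.mpr hodd (hdeg ▸ heven)
  obtain ⟨r, hrq, rfl⟩ := exists_eq_add_rename_of_involutive (cosetPerm_involutive g) hqτ hfree
  have hr : r.IsHomogeneous d := fun m hm => hq (mem_support_iff.mp (hrq (mem_support_iff.mpr hm)))
  have hu : (aeval cosetSum r).IsHomogeneous d := one_mul d ▸ hr.aeval _ cosetSum_isHomogeneous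
  refine ⟨aeval cosetSum r, Asub_eq_range ▸ ⟨r, rfl⟩, hu, ?_, by rw [map_add, act_aeval_cosetSum]⟩
  rw [constantCoeff_eq]
  exact hu.coeff_eq_zero (by rcases hd with rfl | rfl <;> simp)
end
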